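/- arXiv:0908.2528 — 4 statements merged into one kernel-verified Lean document; each statement's English description precedes it below -/
import Mathlib

section
/- Let M = (M_k)_{k≥0} be a non-decreasing logarithmically convex sequence of positive reals with M_0 = 1 satisfying M_k ≥ b_1 b_2^k (k!)^γ for some b_1, b_2 > 0 and γ ∈ (0,1). Let 𝒩(r) be the counting function of M (the smallest k realizing the supremum in ω_M(r) = sup_k ln(r^k/M_k)). Then there exists A_γ > 0 such that 𝒩(r) ≤ A_γ (e·r)^{1/γ} for all r ≥ 0. -/
/-!
At a maximising index `k = 𝒩(r)` the term `log (r^k / M_k)` equals `ω_M(r) ≥ log (r^0 / M_0) = 0`,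
so `M_k ≤ r^k`. Combined with the lower bound `M_k ≥ b₁ b₂^k (k!)^γ` and `k! ≥ (k/e)^k`, taking
`k`-th roots gives `(k/e)^γ ≲ r`, i.e. `k ≲ e · r^{1/γ} ≤ (e r)^{1/γ}`.
-/

open Real

lemma div_exp_one_pow_le_factorial (n : ℕ) : ((n : ℝ) / exp 1) ^ n ≤ n.factorial := by
  have h := Real.pow_div_factorial_le_exp (n : ℝ) n.cast_nonneg n
  rw [← Real.exp_one_pow, div_le_iff₀ (by positivity)] at h
  rw [div_pow, div_le_iff₀ (by positivity)]
  linarith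

lemma pow_le_of_log_div_eq_iSup {M : ℕ → ℝ} (hM0 : M 0 = 1) {k : ℕ} (hMk : 0 < M k) {r : ℝ}
    (hr : 0 < r) (hk : log (r ^ k / M k) = ⨆ j : ℕ, log (r ^ j / M j)) : M k ≤ r ^ k := by
  have hsup : 0 ≤ ⨆ j : ℕ, log (r ^ j / M j) := by
    by_cases hb : BddAbove (Set.range fun j : ℕ => log (r ^ j / M j))
    · simpa [hM0] using le_ciSup hb 0
    · rw [Real.iSup_of_not_bddAbove hb]
  rw [← hk, Real.log_nonneg_iff (by positivity), one_le_div hMk] at hsup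
  exact hsup

lemma natCast_le_of_pow_mul_factorial_rpow_le {a γ r : ℝ} {k : ℕ} (ha : 0 < a) (hγ : 0 < γ)
    (hr : 0 ≤ r) (hk : k ≠ 0) (h : a ^ k * (k.factorial : ℝ) ^ γ ≤ r ^ k) :
    (k : ℝ) ≤ exp 1 * (r / a) ^ (1 / γ) := by
  have hfact : (((k : ℝ) / exp 1) ^ γ) ^ k ≤ (k.factorial : ℝ) ^ γ := by
    rw [← Real.rpow_natCast, ← Real.rpow_mul (by positivity), mul_comm, Real.rpow_mul
      (by positivity), Real.rpow_natCast]
    exact Real.rpow_le_rpow (by positivity) (div_exp_one_pow_le_factorial k) hγ.le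
  have hroot : a * ((k : ℝ) / exp 1) ^ γ ≤ r := by
    refine (pow_le_pow_iff_left₀ (by positivity) hr hk).mp ?_
    calc (a * ((k : ℝ) / exp 1) ^ γ) ^ k = a ^ k * (((k : ℝ) / exp 1) ^ γ) ^ k := mul_pow _ _ _
      _ ≤ a ^ k * (k.factorial : ℝ) ^ γ := by gcongr
      _ ≤ r ^ k := h
  have hdiv : (k : ℝ) / exp 1 ≤ (r / a) ^ (1 / γ) := by
    rw [one_div, Real.le_rpow_inv_iff_of_pos (by positivity) (by positivity) hγ,
      le_div_iff₀ ha, mul_comm]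
    exact hroot
  rwa [div_le_iff₀ (exp_pos 1), mul_comm] at hdiv

lemma natCast_le_of_mul_pow_mul_factorial_rpow_le {b c γ r : ℝ} {k : ℕ} (hb : 0 < b) (hc : 0 < c)
    (hγ0 : 0 < γ) (hγ1 : γ ≤ 1) (hr : 0 ≤ r) (h : b * c ^ k * (k.factorial : ℝ) ^ γ ≤ r ^ k) :
    (k : ℝ) ≤ (min 1 b * c)⁻¹ ^ (1 / γ) * (exp 1 * r) ^ (1 / γ) := by
  rcases Nat.eq_zero_or_pos k with rfl | hk
  · simp only [Nat.cast_zero]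
    positivity
  have ha : 0 < min 1 b * c := mul_pos (lt_min one_pos hb) hc
  -- `min 1 b` is what lets the single factor `b` be absorbed into the `k`-th power.
  have hmin : (min 1 b * c) ^ k ≤ b * c ^ k := by
    rw [mul_pow]
    gcongr
    calc min 1 b ^ k ≤ min 1 b := pow_le_of_le_one (lt_min one_pos hb).le (min_le_left _ _) hk.ne'
      _ ≤ b := min_le_right _ _
  have hkey := natCast_le_of_pow_mul_factorial_rpow_le ha hγ0 hr hk.ne'
    ((mul_le_mul_of_nonneg_right hmin (by positivity)).trans h)
  have he : exp 1 ≤ exp 1 ^ (1 / γ) :=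
    Real.self_le_rpow_of_one_le (one_le_exp zero_le_one) (one_le_one_div hγ0 hγ1)
  calc (k : ℝ) ≤ exp 1 * (r / (min 1 b * c)) ^ (1 / γ) := hkey
    _ ≤ exp 1 ^ (1 / γ) * (r / (min 1 b * c)) ^ (1 / γ) := by gcongr
    _ = (min 1 b * c)⁻¹ ^ (1 / γ) * (exp 1 * r) ^ (1 / γ) := by
      rw [← Real.mul_rpow (by positivity) (by positivity), ← Real.mul_rpow (by positivity)
        (by positivity)]
      congr 1
      field_simp

theorem stmt_4_general (M : ℕ → ℝ) (hMpos : ∀ k, 0 < M k) (hM0 : M 0 = 1)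
    (b1 b2 γ : ℝ) (hb1 : 0 < b1) (hb2 : 0 < b2) (hγ : γ ∈ Set.Ioo (0:ℝ) 1)
    (hlow : ∀ k : ℕ, b1 * b2 ^ k * (Nat.factorial k : ℝ) ^ γ ≤ M k)
    (ω : ℝ → ℝ)
    (hω : ∀ r : ℝ, 0 < r → ω r = ⨆ k : ℕ, Real.log (r ^ k / M k))
    (N : ℝ → ℕ) (hN0 : N 0 = 0)
    (hN : ∀ r : ℝ, 0 < r → IsLeast {k : ℕ | Real.log (r ^ k / M k) = ω r} (N r)) :
    ∃ A : ℝ, 0 < A ∧ ∀ r : ℝ, 0 ≤ r → (N r : ℝ) ≤ A * (Real.exp 1 * r) ^ (1 / γ) := by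
  obtain ⟨hγ0, hγ1⟩ := hγ
  refine ⟨(min 1 b1 * b2)⁻¹ ^ (1 / γ), by positivity, fun r hr => ?_⟩
  rcases hr.eq_or_lt with rfl | hr
  · simp only [hN0, Nat.cast_zero]
    positivity
  have hMN : M (N r) ≤ r ^ N r :=
    pow_le_of_log_div_eq_iSup hM0 (hMpos _) hr ((hN r hr).1.trans (hω r hr))
  exact natCast_le_of_mul_pow_mul_factorial_rpow_le hb1 hb2 hγ0 hγ1.le hr.le
    ((hlow _).trans hMN)

theorem stmt_4 (M : ℕ → ℝ) (hMpos : ∀ k, 0 < M k) (hM0 : M 0 = 1)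
    (hmono : Monotone M)
    (hconv : ∀ k : ℕ, 1 ≤ k → M k ^ 2 ≤ M (k - 1) * M (k + 1))
    (b1 b2 γ : ℝ) (hb1 : 0 < b1) (hb2 : 0 < b2) (hγ : γ ∈ Set.Ioo (0:ℝ) 1)
    (hlow : ∀ k : ℕ, b1 * b2 ^ k * (Nat.factorial k : ℝ) ^ γ ≤ M k)
    (ω : ℝ → ℝ) (hω0 : ω 0 = 0)
    (hω : ∀ r : ℝ, 0 < r → ω r = ⨆ k : ℕ, Real.log (r ^ k / M k))
    (N : ℝ → ℕ) (hN0 : N 0 = 0)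
    (hN : ∀ r : ℝ, 0 < r → IsLeast {k : ℕ | Real.log (r ^ k / M k) = ω r} (N r)) :
    ∃ A : ℝ, 0 < A ∧ ∀ r : ℝ, 0 ≤ r → (N r : ℝ) ≤ A * (Real.exp 1 * r) ^ (1 / γ) :=
  stmt_4_general M hMpos hM0 b1 b2 γ hb1 hb2 hγ hlow ω hω N hN0 hN
end

section
/- Let M be a non-decreasing logarithmically convex sequence with M_0 = 1 satisfying M_k ≥ b_1 b_2^k (k!)^γ for some b_1, b_2 > 0 and γ ∈ (0,1), and let ω_M be its associated function. Then for all r_1, r_2 ≥ 0, |ω_M(r_2) − ω_M(r_1)| ≤ A_γ e^{1/γ} (r_1 + r_2)^{1/γ − 1} |r_2 − r_1|, where A_γ is a constant such that ω_M(r) ≤ A_γ r^{1/γ} and the counting function satisfies 𝒩(r) ≤ A_γ (er)^{1/γ}. -/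
/-!
Since `𝒩(t)` is an index at which the supremum defining `ω(t)` is attained, comparing the terms
with index `𝒩(s)` and `𝒩(t)` gives
`𝒩(s) (log t - log s) ≤ ω(t) - ω(s) ≤ 𝒩(t) (log t - log s)`.
The left inequality makes `ω` nondecreasing. Summing the right one over a fine partition in the
variable `log t` and inserting `𝒩(t) ≤ c t^(1/γ)`, `c = A e^(1/γ)`, yields the discrete form of
`∫ 𝒩(t)/t dt ≤ c γ (r₂^(1/γ) - r₁^(1/γ))`, and the mean value inequality for `x ↦ x^(1/γ)` finishes.
The lower bound `M_k ≥ b₁ b₂^k (k!)^γ` only serves to make the supremum finite.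
-/

open Real Filter Finset Topology

open scoped Nat

theorem sub_le_sub_of_sub_le_mul_sub {F G g : ℝ → ℝ} {u v : ℝ} (huv : u ≤ v)
    (hF : ∀ a b, a ≤ b → F b - F a ≤ g b * (b - a))
    (hG : ∀ a b, a ≤ b → g a * (b - a) ≤ G b - G a) :
    F v - F u ≤ G v - G u := by
  -- On the uniform partition with `n` steps the errors `(g (t i.succ) - g (t i)) * δ` telescope.
  have hmesh : ∀ n : ℕ, 0 < n → F v - F u ≤ G v - G u + (g v - g u) * (v - u) / n := by
    intro n hn
    set δ := (v - u) / n with hδ_def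
    set t : ℕ → ℝ := fun i => u + i * δ
    have hδ : 0 ≤ δ := div_nonneg (sub_nonneg.2 huv) n.cast_nonneg
    have ht0 : t 0 = u := by simp [t]
    have htn : t n = v := by simp only [t, δ]; field_simp; ring
    have hstep : ∀ i, t (i + 1) - t i = δ := fun i => by simp only [t]; push_cast; ring
    calc F v - F u = ∑ i ∈ range n, (F (t (i + 1)) - F (t i)) := by
          rw [sum_range_sub (fun i => F (t i)), ht0, htn]
      _ ≤ ∑ i ∈ range n, (G (t (i + 1)) - G (t i) + (g (t (i + 1)) - g (t i)) * δ) := by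
          gcongr with i
          have hle : t i ≤ t (i + 1) := by linarith [hstep i]
          have hF' := hF _ _ hle
          have hG' := hG _ _ hle
          rw [hstep] at hF' hG'
          linarith
      _ = G v - G u + (g v - g u) * (v - u) / n := by
          rw [sum_add_distrib, ← sum_mul, sum_range_sub (fun i => G (t i)),
            sum_range_sub (fun i => g (t i)), ht0, htn, hδ_def, mul_div_assoc]
  have hlim : Tendsto (fun n : ℕ => G v - G u + (g v - g u) * (v - u) / n) atTop
      (𝓝 (G v - G u)) := by
    simpa using (tendsto_const_div_atTop_nhds_zero_nat ((g v - g u) * (v - u))).const_add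
      (G v - G u)
  exact ge_of_tendsto hlim (eventually_atTop.2 ⟨1, hmesh⟩)

theorem pow_div_factorial_rpow_le_exp {a γ : ℝ} (ha : 0 ≤ a) (hγ : 0 < γ) (k : ℕ) :
    a ^ k / (k ! : ℝ) ^ γ ≤ exp (γ * a ^ (1 / γ)) := by
  have hpow : a ^ k = ((a ^ (1 / γ)) ^ k) ^ γ := by
    rw [← rpow_natCast (a ^ (1 / γ)), ← rpow_mul ha, ← rpow_mul ha, ← rpow_natCast]
    congr 1
    field_simp
  calc a ^ k / (k ! : ℝ) ^ γ = ((a ^ (1 / γ)) ^ k / k !) ^ γ := by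
        rw [hpow, div_rpow (by positivity) (by positivity)]
    _ ≤ exp (a ^ (1 / γ)) ^ γ := by
        gcongr
        exact pow_div_factorial_le_exp _ (by positivity) k
    _ = exp (γ * a ^ (1 / γ)) := by rw [← exp_mul, mul_comm]

theorem bddAbove_range_log_pow_div {M : ℕ → ℝ} {b₁ b₂ γ : ℝ} (hM : ∀ k, 0 < M k)
    (hb₁ : 0 < b₁) (hb₂ : 0 < b₂) (hγ : 0 < γ)
    (hlow : ∀ k : ℕ, b₁ * b₂ ^ k * (k ! : ℝ) ^ γ ≤ M k) {r : ℝ} (hr : 0 < r) :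
    BddAbove (Set.range fun k => log (r ^ k / M k)) := by
  refine ⟨log (exp (γ * (r / b₂) ^ (1 / γ)) / b₁), ?_⟩
  rintro _ ⟨k, rfl⟩
  refine log_le_log (div_pos (pow_pos hr k) (hM k)) ?_
  calc r ^ k / M k ≤ r ^ k / (b₁ * b₂ ^ k * (k ! : ℝ) ^ γ) := by
        gcongr
        exact hlow k
    _ = (r / b₂) ^ k / (k ! : ℝ) ^ γ / b₁ := by
        rw [div_pow]
        field_simp
    _ ≤ exp (γ * (r / b₂) ^ (1 / γ)) / b₁ := by
        gcongr
        exact pow_div_factorial_rpow_le_exp (by positivity) hγ k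

theorem natCast_mul_log_sub_le_sub {M : ℕ → ℝ} {ω : ℝ → ℝ} {N : ℝ → ℕ} (hM : ∀ k, 0 < M k)
    (hle : ∀ r, 0 < r → ∀ k, log (r ^ k / M k) ≤ ω r)
    (hN : ∀ r, 0 < r → log (r ^ N r / M (N r)) = ω r) {s t : ℝ} (hs : 0 < s) (ht : 0 < t) :
    N s * (log t - log s) ≤ ω t - ω s := by
  have h := hle t ht (N s)
  rw [← hN s hs]
  rw [log_div (pow_pos ht _).ne' (hM _).ne', log_pow] at h
  rw [log_div (pow_pos hs _).ne' (hM _).ne', log_pow]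
  linarith

theorem monotoneOn_of_mul_log_sub_le_sub {ω n : ℝ → ℝ} (hn : ∀ s, 0 < s → 0 ≤ n s)
    (hω0 : ∀ t, 0 < t → ω 0 ≤ ω t)
    (hstep : ∀ s t, 0 < s → 0 < t → n s * (log t - log s) ≤ ω t - ω s) :
    MonotoneOn ω (Set.Ici 0) := by
  intro x hx y _ hxy
  rcases (Set.mem_Ici.1 hx).eq_or_lt with rfl | hx
  · rcases hxy.eq_or_lt with rfl | hy
    · rfl
    · exact hω0 y hy
  · have := hstep x y hx (hx.trans_le hxy)
    nlinarith [log_le_log hx hxy, hn x hx]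

theorem rpow_sub_rpow_le_mul_rpow_mul_sub {p x y : ℝ} (hp : 1 ≤ p) (hx : 0 ≤ x) (hxy : x ≤ y) :
    y ^ p - x ^ p ≤ p * y ^ (p - 1) * (y - x) := by
  rcases hxy.eq_or_lt with rfl | hxy
  · simp
  have hslope := (convexOn_rpow hp).slope_le_of_hasDerivAt (Set.mem_Ici.2 hx)
    (Set.mem_Ici.2 (hx.trans hxy.le)) hxy (hasDerivAt_rpow_const (Or.inr hp))
  rwa [slope_def_field, div_le_iff₀ (sub_pos.2 hxy)] at hslope

theorem sub_le_div_mul_rpow_sub_rpow {ω n : ℝ → ℝ} {c p : ℝ} (hc : 0 ≤ c) (hp : 0 < p)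
    (hstep : ∀ s t, 0 < s → 0 < t → n s * (log t - log s) ≤ ω t - ω s)
    (hn : ∀ t, 0 < t → n t ≤ c * t ^ p) {x y : ℝ} (hx : 0 < x) (hxy : x ≤ y) :
    ω y - ω x ≤ c / p * (y ^ p - x ^ p) := by
  have hy := hx.trans_le hxy
  -- In the variable `u = log t` the weight `n t ≤ c t ^ p` becomes `c * exp (u * p)`,
  -- whose primitive is `c / p * exp (u * p)`.
  have key := sub_le_sub_of_sub_le_mul_sub (F := fun u => ω (exp u))
    (g := fun u => c * exp (u * p)) (G := fun u => c / p * exp (u * p))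
    (log_le_log hx hxy) ?_ ?_
  · simpa only [exp_log hx, exp_log hy, ← rpow_def_of_pos hx, ← rpow_def_of_pos hy,
      ← mul_sub] using key
  · intro a b hab
    have h := hstep (exp b) (exp a) (exp_pos b) (exp_pos a)
    rw [log_exp, log_exp] at h
    have hnb := hn (exp b) (exp_pos b)
    rw [← exp_mul] at hnb
    nlinarith
  · intro a b _
    have htangent : exp (a * p) * (1 + (b - a) * p) ≤ exp (b * p) := by
      have := add_one_le_exp ((b - a) * p)
      calc exp (a * p) * (1 + (b - a) * p) ≤ exp (a * p) * exp ((b - a) * p) := by gcongr; linarith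
        _ = exp (b * p) := by rw [← exp_add]; ring_nf
    calc c * exp (a * p) * (b - a) = c / p * (exp (a * p) * (1 + (b - a) * p) - exp (a * p)) := by
          field_simp
          ring
      _ ≤ c / p * (exp (b * p) - exp (a * p)) := by gcongr
      _ = c / p * exp (b * p) - c / p * exp (a * p) := mul_sub _ _ _

theorem sub_le_mul_add_rpow_mul_sub {ω n : ℝ → ℝ} {c p : ℝ} (hc : 0 ≤ c) (hp : 1 ≤ p)
    (hstep : ∀ s t, 0 < s → 0 < t → n s * (log t - log s) ≤ ω t - ω s)
    (hn : ∀ t, 0 < t → n t ≤ c * t ^ p) {x y : ℝ} (hx : 0 < x) (hxy : x ≤ y) :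
    ω y - ω x ≤ c * (x + y) ^ (p - 1) * (y - x) := by
  have hp0 : 0 < p := zero_lt_one.trans_le hp
  calc ω y - ω x ≤ c / p * (y ^ p - x ^ p) :=
        sub_le_div_mul_rpow_sub_rpow hc hp0 hstep hn hx hxy
    _ ≤ c / p * (p * y ^ (p - 1) * (y - x)) := by
        gcongr
        exact rpow_sub_rpow_le_mul_rpow_mul_sub hp hx.le hxy
    _ = c * y ^ (p - 1) * (y - x) := by field_simp
    _ ≤ c * (x + y) ^ (p - 1) * (y - x) := by gcongr <;> linarith

theorem stmt_5_general (M : ℕ → ℝ) (hMpos : ∀ k, 0 < M k) (hM0 : M 0 = 1)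
    (b1 b2 γ : ℝ) (hb1 : 0 < b1) (hb2 : 0 < b2) (hγ : γ ∈ Set.Ioo (0:ℝ) 1)
    (hlow : ∀ k : ℕ, b1 * b2 ^ k * (Nat.factorial k : ℝ) ^ γ ≤ M k)
    (ω : ℝ → ℝ) (hω0 : ω 0 = 0)
    (hω : ∀ r : ℝ, 0 < r → ω r = ⨆ k : ℕ, Real.log (r ^ k / M k))
    (N : ℝ → ℕ)
    (hN : ∀ r : ℝ, 0 < r → IsLeast {k : ℕ | Real.log (r ^ k / M k) = ω r} (N r))
    (A : ℝ) (hA : 0 < A)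
    (hωA : ∀ r : ℝ, 0 ≤ r → ω r ≤ A * r ^ (1 / γ))
    (hNA : ∀ r : ℝ, 0 ≤ r → (N r : ℝ) ≤ A * (Real.exp 1 * r) ^ (1 / γ)) :
    ∀ r1 r2 : ℝ, 0 ≤ r1 → 0 ≤ r2 →
      |ω r2 - ω r1| ≤
        A * Real.exp 1 ^ (1 / γ) * (r1 + r2) ^ (1 / γ - 1) * |r2 - r1| := by
  obtain ⟨hγ0, hγ1⟩ := hγ
  have hle : ∀ r, 0 < r → ∀ k, log (r ^ k / M k) ≤ ω r := fun r hr k =>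
    (hω r hr).symm ▸ le_ciSup (bddAbove_range_log_pow_div hMpos hb1 hb2 hγ0 hlow hr) k
  have hstep : ∀ s t, 0 < s → 0 < t → N s * (log t - log s) ≤ ω t - ω s := fun s t hs ht =>
    natCast_mul_log_sub_le_sub hMpos hle (fun r hr => (hN r hr).1) hs ht
  have hmono : MonotoneOn ω (Set.Ici 0) := monotoneOn_of_mul_log_sub_le_sub
    (fun s _ => (N s).cast_nonneg) (fun t ht => by simpa [hω0, hM0] using hle t ht 0) hstep
  have hlip : ∀ x y, 0 ≤ x → x ≤ y →
      ω y - ω x ≤ A * exp 1 ^ (1 / γ) * (x + y) ^ (1 / γ - 1) * (y - x) := by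
    intro x y hx hxy
    rcases hx.eq_or_lt with rfl | hx
    · calc ω y - ω 0 ≤ A * y ^ (1 / γ) := by rw [hω0, sub_zero]; exact hωA y hxy
        _ = A * 1 * (0 + y) ^ (1 / γ - 1) * (y - 0) := by
            rw [zero_add, sub_zero, mul_one, mul_assoc, ← rpow_add_one' hxy (by simp; positivity),
              sub_add_cancel]
        _ ≤ A * exp 1 ^ (1 / γ) * (0 + y) ^ (1 / γ - 1) * (y - 0) := by
            gcongr
            exact one_le_rpow (one_le_exp zero_le_one) (by positivity)
    refine sub_le_mul_add_rpow_mul_sub (by positivity) (one_le_one_div hγ0 hγ1.le) hstep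
      (fun t ht => ?_) hx hxy
    simpa only [mul_rpow (exp_pos 1).le ht.le, mul_assoc] using hNA t ht.le
  intro r1 r2 hr1 hr2
  wlog h : r1 ≤ r2 generalizing r1 r2
  · rw [abs_sub_comm, abs_sub_comm r2, add_comm]
    exact this r2 r1 hr2 hr1 (le_of_not_ge h)
  rw [abs_of_nonneg (sub_nonneg.2 (hmono hr1 hr2 h)), abs_of_nonneg (sub_nonneg.2 h)]
  exact hlip r1 r2 hr1 h

theorem stmt_5 (M : ℕ → ℝ) (hMpos : ∀ k, 0 < M k) (hM0 : M 0 = 1)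
    (hmono : Monotone M)
    (hconv : ∀ k : ℕ, 1 ≤ k → M k ^ 2 ≤ M (k - 1) * M (k + 1))
    (b1 b2 γ : ℝ) (hb1 : 0 < b1) (hb2 : 0 < b2) (hγ : γ ∈ Set.Ioo (0:ℝ) 1)
    (hlow : ∀ k : ℕ, b1 * b2 ^ k * (Nat.factorial k : ℝ) ^ γ ≤ M k)
    (ω : ℝ → ℝ) (hω0 : ω 0 = 0)
    (hω : ∀ r : ℝ, 0 < r → ω r = ⨆ k : ℕ, Real.log (r ^ k / M k))
    (N : ℝ → ℕ) (hN0 : N 0 = 0)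
    (hN : ∀ r : ℝ, 0 < r → IsLeast {k : ℕ | Real.log (r ^ k / M k) = ω r} (N r))
    (A : ℝ) (hA : 0 < A)
    (hωA : ∀ r : ℝ, 0 ≤ r → ω r ≤ A * r ^ (1 / γ))
    (hNA : ∀ r : ℝ, 0 ≤ r → (N r : ℝ) ≤ A * (Real.exp 1 * r) ^ (1 / γ)) :
    ∀ r1 r2 : ℝ, 0 ≤ r1 → 0 ≤ r2 →
      |ω r2 - ω r1| ≤
        A * Real.exp 1 ^ (1 / γ) * (r1 + r2) ^ (1 / γ - 1) * |r2 - r1| :=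
  stmt_5_general M hMpos hM0 b1 b2 γ hb1 hb2 hγ hlow ω hω0 hω N hN A hA hωA hNA
end

section
/- Let C be an open convex acute cone in ℝⁿ and b a convex continuous positively homogeneous degree-1 function on cl(C) with |b(y)| ≤ r‖y‖ for some r > 0 and all y ∈ cl(C). Then U(b,C) = {ξ ∈ ℝⁿ : −⟨ξ,y⟩ ≤ b(y) ∀y ∈ C} is contained in C* + B_r, where C* = {ξ : ⟨ξ,x⟩ ≥ 0 ∀x ∈ C} is the dual cone and B_r is the closed ball of radius r centered at the origin. -/
/-!
Decompose `ξ = p - q` à la Moreau with respect to the closed cone `K = cl C`: `p` lies in the dual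
cone, `q ∈ K` and `⟪p, q⟫ = 0`. Then `‖q‖² = -⟪ξ, q⟫ ≤ b q ≤ r ‖q‖`, the first inequality being the
defining inequality of `U(b, C)` extended to `cl C` by continuity, so `‖q‖ ≤ r`.
-/

open RealInnerProductSpace Pointwise

section Moreau

variable {E : Type*} [NormedAddCommGroup E] [InnerProductSpace ℝ E] [CompleteSpace E]

theorem ProperCone.exists_moreau_decomposition (K : ProperCone ℝ E) (ξ : E) :
    ∃ p ∈ innerDual (K : Set E), ∃ q ∈ K, ξ = p - q ∧ ⟪p, q⟫ = 0 := by
  set D := innerDual (K : Set E)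
  obtain ⟨p, hpD, hmin⟩ :=
    exists_norm_eq_iInf_of_complete_convex D.nonempty D.isClosed.isComplete D.convex ξ
  have hvar : ∀ w ∈ D, ⟪ξ - p, w - p⟫ ≤ 0 :=
    (norm_eq_iInf_iff_real_inner_le_zero D.convex hpD).1 hmin
  have horth : ⟪ξ - p, p⟫ = 0 := by
    have h0 := hvar 0 D.zero_mem
    have h2 := hvar ((2 : ℝ) • p) (D.smul_mem hpD zero_le_two)
    rw [zero_sub, inner_neg_right] at h0
    rw [two_smul, add_sub_cancel_right] at h2
    linarith
  refine ⟨p, hpD, p - ξ, ?_, by abel, ?_⟩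
  · rw [← K.innerDual_innerDual, mem_innerDual]
    intro w hw
    have h := hvar (w + p) (D.add_mem hw hpD)
    rw [add_sub_cancel_right, real_inner_comm] at h
    rw [← neg_sub, inner_neg_right]
    linarith
  · rw [← neg_sub, inner_neg_right, real_inner_comm, horth, neg_zero]

end Moreau

theorem exists_properCone_coe_eq_closure {E : Type*} [AddCommGroup E] [Module ℝ E]
    [TopologicalSpace E] [ContinuousAdd E] [ContinuousSMul ℝ E] {C : Set E}
    (hconv : Convex ℝ C) (hne : C.Nonempty) (hcone : ∀ x ∈ C, ∀ t : ℝ, 0 < t → t • x ∈ C) :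
    ∃ K : ProperCone ℝ E, (K : Set E) = closure C := by
  let K₀ : ConvexCone ℝ E :=
    { carrier := C
      smul_mem' := fun t ht x hx => hcone x hx t ht
      add_mem' := fun u hu v hv => by
        -- `u + v = 2 • ((1/2) • u + (1/2) • v)`
        have hmid := hconv hu hv (by norm_num : (0 : ℝ) ≤ 1 / 2) (by norm_num : (0 : ℝ) ≤ 1 / 2)
          (by norm_num)
        simpa [smul_add, smul_smul] using hcone _ hmid 2 two_pos }
  have hK₀ : (K₀.closure : Set E).Nonempty ∧ IsClosed (K₀.closure : Set E) :=
    ⟨hne.mono subset_closure, isClosed_closure⟩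
  lift K₀.closure to ProperCone ℝ E using hK₀ with K hK
  exact ⟨K, congrArg SetLike.coe hK⟩

theorem stmt_12_general (n : ℕ) (C : Set (EuclideanSpace ℝ (Fin n)))
    (hCconv : Convex ℝ C) (hCne : C.Nonempty)
    (hCcone : ∀ x ∈ C, ∀ t : ℝ, 0 < t → t • x ∈ C)
    (b : EuclideanSpace ℝ (Fin n) → ℝ)
    (hbcont : ContinuousOn b (closure C))
    (r : ℝ) (hr : 0 < r) (hbr : ∀ y ∈ closure C, |b y| ≤ r * ‖y‖) :
    {ξ : EuclideanSpace ℝ (Fin n) | ∀ y ∈ C, -⟪ξ, y⟫ ≤ b y} ⊆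
      {ξ : EuclideanSpace ℝ (Fin n) | ∀ x ∈ C, 0 ≤ ⟪ξ, x⟫} +
        Metric.closedBall (0 : EuclideanSpace ℝ (Fin n)) r := by
  intro ξ hξ
  obtain ⟨K, hK⟩ := exists_properCone_coe_eq_closure hCconv hCne hCcone
  obtain ⟨p, hp, q, hq, rfl, hpq⟩ := K.exists_moreau_decomposition ξ
  rw [← SetLike.mem_coe, hK] at hq
  have hbq : -⟪p - q, q⟫ ≤ b q :=
    ContinuousWithinAt.closure_le hq (continuous_const.inner continuous_id).neg.continuousWithinAt
      ((hbcont q hq).mono subset_closure) hξ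
  have hq_sq : ‖q‖ ^ 2 ≤ r * ‖q‖ :=
    calc ‖q‖ ^ 2 = -⟪p - q, q⟫ := by
          rw [inner_sub_left, hpq, real_inner_self_eq_norm_sq, zero_sub, neg_neg]
      _ ≤ b q := hbq
      _ ≤ r * ‖q‖ := (le_abs_self _).trans (hbr q hq)
  have hq_le : ‖q‖ ≤ r := by nlinarith [norm_nonneg q]
  refine Set.mem_add.mpr ⟨p, fun x hx => ?_, -q, by simpa using hq_le, (sub_eq_add_neg p q).symm⟩
  rw [real_inner_comm]
  exact ProperCone.mem_innerDual.1 hp (hK ▸ subset_closure hx)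

theorem stmt_12 (n : ℕ) (C : Set (EuclideanSpace ℝ (Fin n)))
    (hCopen : IsOpen C) (hCconv : Convex ℝ C) (hCne : C.Nonempty)
    (hCcone : ∀ x ∈ C, ∀ t : ℝ, 0 < t → t • x ∈ C)
    (hacute : ∀ x : EuclideanSpace ℝ (Fin n), x ≠ 0 →
      ¬ (x ∈ closure C ∧ -x ∈ closure C))
    (b : EuclideanSpace ℝ (Fin n) → ℝ)
    (hbconv : ConvexOn ℝ (closure C) b) (hbcont : ContinuousOn b (closure C))
    (hbhom : ∀ y ∈ closure C, ∀ t : ℝ, 0 < t → b (t • y) = t * b y)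
    (r : ℝ) (hr : 0 < r) (hbr : ∀ y ∈ closure C, |b y| ≤ r * ‖y‖) :
    {ξ : EuclideanSpace ℝ (Fin n) | ∀ y ∈ C, -⟪ξ, y⟫ ≤ b y} ⊆
      {ξ : EuclideanSpace ℝ (Fin n) | ∀ x ∈ C, 0 ≤ ⟪ξ, x⟫} +
        Metric.closedBall (0 : EuclideanSpace ℝ (Fin n)) r :=
  stmt_12_general n C hCconv hCne hCcone b hbcont r hr hbr
end

section
/- Let C be an open convex acute cone in ℝⁿ, b a convex continuous positively homogeneous degree-1 function on cl(C), and U = U(b,C) = {ξ : −⟨ξ,y⟩ ≤ b(y) ∀y ∈ C}. For y ∈ C and a positive integer m, let g(ξ) = −⟨ξ,y⟩ + m·ln(1+‖ξ‖). Then there exists a constant d > 0, depending on b, C and m but not on y, such that sup_{ξ∈U} g(ξ) ≤ b(y) + d·m + 3m·ln(1 + 1/Δ_C(y)) + 2m·ln(1 + ‖y‖), where Δ_C(y) denotes the distance from y to the boundary of C. -/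
/-!
Since `b` is continuous and positively homogeneous on the closed cone `closure C`, it satisfies
`|b z| ≤ M * ‖z‖` there. Acuteness puts `0` on the frontier of `C`, so `Δ = Δ_C(y)` lies in
`(0, ‖y‖]` and the closed ball of radius `Δ / 2` about `y` lies in `C`. Testing `ξ ∈ U` at the
point `w = y - (Δ / 2) • ξ / ‖ξ‖` of that ball gives `-⟪ξ, y⟫ + Δ / 2 * ‖ξ‖ ≤ M * (‖y‖ + Δ / 2)`,
so `‖ξ‖` is controlled by the slack `b y + ⟪ξ, y⟫ ≥ 0` divided by `Δ`. The elementary inequality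
`μ * log (1 + s) - δ * s ≤ μ * log (1 + μ / δ)` then trades the logarithm of `‖ξ‖` for that slack.
-/

open RealInnerProductSpace

open Metric Set Filter Topology

namespace Real

lemma mul_log_one_add_sub_mul_le {μ δ s : ℝ} (hμ : 0 ≤ μ) (hδ : 0 < δ) (hs : 0 ≤ s) :
    μ * log (1 + s) - δ * s ≤ μ * log (1 + μ / δ) := by
  set a := 1 + μ / δ with ha_def
  have ha : 0 < a := by positivity
  have hlog : log (1 + s) - log a ≤ (1 + s) / a - 1 := by
    rw [← log_div (by positivity) ha.ne']
    exact log_le_sub_one_of_pos (by positivity)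
  have hslack : μ * ((1 + s) / a - 1) ≤ δ * s := by
    rw [div_sub_one ha.ne', mul_div_assoc', div_le_iff₀ ha]
    have : δ * s * a = δ * s + μ * s := by rw [ha_def]; field_simp
    nlinarith [mul_nonneg hμ (div_nonneg hμ hδ.le)]
  nlinarith [mul_le_mul_of_nonneg_left hlog hμ]

lemma log_one_add_mul_le {a b : ℝ} (ha : 0 ≤ a) (hb : 0 ≤ b) :
    log (1 + a * b) ≤ log (1 + a) + log (1 + b) := by
  rw [← log_mul (by positivity) (by positivity)]
  exact log_le_log (by positivity) (by nlinarith)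

lemma log_one_add_nonneg {a : ℝ} (ha : 0 ≤ a) : 0 ≤ log (1 + a) :=
  log_nonneg (le_add_of_nonneg_right ha)

/-- With `p = -⟪ξ, y⟫`, `t = ‖ξ‖`, `B = b y`, `ny = ‖y‖`: the slack `B - p` bounds `Δ * t`, and
`mul_log_one_add_sub_mul_le` lets it absorb `m * log (1 + t)`. -/
lemma add_mul_log_one_add_le {M Δ ny t p B m : ℝ} (hM : 0 < M) (hm : 0 ≤ m) (hΔ : 0 < Δ)
    (hΔny : Δ ≤ ny) (ht : 0 ≤ t) (hpB : p ≤ B) (hB : -(M * ny) ≤ B)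
    (hkey : p + Δ / 2 * t ≤ M * (ny + Δ / 2)) :
    p + m * log (1 + t) ≤
      B + (log (1 + 6 * M) + log (1 + 2 * m)) * m +
        3 * m * log (1 + 1 / Δ) + 2 * m * log (1 + ny) := by
  have hny : 0 ≤ ny := hΔ.le.trans hΔny
  set s := 2 * (B - p) / Δ with hs_def
  have hs : 0 ≤ s := by have := sub_nonneg.2 hpB; positivity
  have hslack : Δ / 2 * s = B - p := by rw [hs_def]; field_simp
  have ht_le : 1 + t ≤ (1 + 6 * M * (ny * (1 / Δ))) * (1 + s) := by
    have : t ≤ 6 * M * (ny * (1 / Δ)) + s := by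
      rw [← mul_le_mul_iff_of_pos_left (by positivity : 0 < Δ / 2)]
      have : Δ / 2 * (6 * M * (ny * (1 / Δ))) = 3 * M * ny := by field_simp; ring
      nlinarith
    nlinarith [mul_nonneg (by positivity : 0 ≤ 6 * M * (ny * (1 / Δ))) hs]
  have hlog_t : log (1 + t) ≤
      log (1 + 6 * M * (ny * (1 / Δ))) + log (1 + s) := by
    rw [← log_mul (by positivity) (by positivity)]
    exact log_le_log (by positivity) ht_le
  have hlog_s := mul_log_one_add_sub_mul_le hm (half_pos hΔ) hs
  have h2m : m / (Δ / 2) = 2 * m * (1 / Δ) := by field_simp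
  rw [h2m] at hlog_s
  have hlog_a := log_one_add_mul_le (by positivity : 0 ≤ 6 * M) (by positivity : 0 ≤ ny * (1 / Δ))
  have hlog_y := log_one_add_mul_le hny (by positivity : 0 ≤ 1 / Δ)
  have hlog_m := log_one_add_mul_le (by positivity : 0 ≤ 2 * m) (by positivity : 0 ≤ 1 / Δ)
  have h1 := mul_nonneg hm (log_one_add_nonneg (by positivity : 0 ≤ 1 / Δ))
  have h2 := mul_nonneg hm (log_one_add_nonneg hny)
  nlinarith [mul_le_mul_of_nonneg_left hlog_t hm, mul_le_mul_of_nonneg_left hlog_a hm,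
    mul_le_mul_of_nonneg_left hlog_y hm, mul_le_mul_of_nonneg_left hlog_m hm]

end Real

section Geometry

variable {E : Type*} [NormedAddCommGroup E]

theorem Metric.ball_infDist_frontier_subset_interior [NormedSpace ℝ E] {s : Set E} {y : E}
    (hy : y ∈ s) : ball y (infDist y (frontier s)) ⊆ interior s := by
  intro z hz
  have hyz : y ∈ ball y (infDist y (frontier s)) := mem_ball_self (pos_of_mem_ball hz)
  have hdisj : Disjoint (ball y (infDist y (frontier s))) (frontier s) := disjoint_ball_infDist
  have hcover : ball y (infDist y (frontier s)) ⊆ interior s ∪ (closure s)ᶜ := fun x hx => by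
    by_cases hxs : x ∈ closure s
    · exact .inl (by_contra fun hxi => hdisj.notMem_of_mem_left hx ⟨hxs, hxi⟩)
    · exact .inr hxs
  have hy_int : y ∈ interior s := (hcover hyz).resolve_right (not_not.2 (subset_closure hy))
  exact (convex_ball y _).isPreconnected.subset_left_of_subset_union isOpen_interior
    isClosed_closure.isOpen_compl (disjoint_compl_right.mono_left interior_subset_closure)
    hcover ⟨y, hyz, hy_int⟩ hz

theorem zero_mem_closure_of_smul_mem [NormedSpace ℝ E] {C : Set E} {x : E}
    (hx : ∀ t : ℝ, 0 < t → t • x ∈ C) : (0 : E) ∈ closure C := by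
  have hlim : Tendsto (fun t : ℝ => t • x) (𝓝 0) (𝓝 ((0 : ℝ) • x)) :=
    (continuous_id.smul continuous_const).tendsto 0
  rw [zero_smul] at hlim
  exact mem_closure_of_tendsto (hlim.mono_left (nhdsWithin_le_nhds (s := Ioi 0)))
    (eventually_nhdsWithin_of_forall hx)

theorem exists_ne_zero_mem_and_neg_mem [NormedSpace ℝ E] [Nontrivial E] {C : Set E}
    (hC : C ∈ 𝓝 (0 : E)) : ∃ x ≠ 0, x ∈ C ∧ -x ∈ C := by
  have hneg : ∀ᶠ x in 𝓝 (0 : E), -x ∈ C :=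
    (continuous_neg.tendsto' (0 : E) 0 neg_zero).eventually_mem hC
  have hne : ∀ᶠ x in 𝓝[≠] (0 : E), x ≠ 0 := eventually_mem_nhdsWithin
  exact (hne.and (nhdsWithin_le_nhds (Filter.Eventually.and hC hneg))).exists

theorem zero_mem_frontier_of_cone [NormedSpace ℝ E] [Nontrivial E] {C : Set E}
    (hCne : C.Nonempty) (hCcone : ∀ x ∈ C, ∀ t : ℝ, 0 < t → t • x ∈ C)
    (hacute : ∀ x : E, x ≠ 0 → ¬(x ∈ closure C ∧ -x ∈ closure C)) : (0 : E) ∈ frontier C := by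
  obtain ⟨x, hx⟩ := hCne
  refine ⟨zero_mem_closure_of_smul_mem (hCcone x hx), fun h0 => ?_⟩
  obtain ⟨z, hz0, hzC, hnegC⟩ := exists_ne_zero_mem_and_neg_mem (mem_interior_iff_mem_nhds.1 h0)
  exact hacute z hz0 ⟨subset_closure hzC, subset_closure hnegC⟩

theorem exists_abs_le_mul_norm_of_homogeneous [NormedSpace ℝ E] [ProperSpace E] {K : Set E}
    {b : E → ℝ} (hK : IsClosed K) (hKcone : ∀ z ∈ K, ∀ t : ℝ, 0 < t → t • z ∈ K)
    (hb : ContinuousOn b K) (hbhom : ∀ z ∈ K, ∀ t : ℝ, 0 < t → b (t • z) = t * b z) :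
    ∃ M, 0 < M ∧ ∀ z ∈ K, |b z| ≤ M * ‖z‖ := by
  obtain ⟨M, hM⟩ := ((isCompact_sphere (0 : E) 1).inter_left hK).exists_bound_of_continuousOn
    (hb.mono inter_subset_left)
  refine ⟨max M 1, by positivity, fun z hz => ?_⟩
  rcases eq_or_ne z 0 with rfl | hz0
  · have h2 := hbhom 0 hz 2 two_pos
    rw [smul_zero] at h2
    simp [show b 0 = 0 by linarith]
  have hnz : 0 < ‖z‖ := norm_pos_iff.2 hz0
  have hu : ‖z‖⁻¹ • z ∈ K ∩ sphere 0 1 :=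
    ⟨hKcone z hz _ (inv_pos.2 hnz), by
      rw [mem_sphere_zero_iff_norm, norm_smul, norm_inv, norm_norm, inv_mul_cancel₀ hnz.ne']⟩
  have hbz : b z = ‖z‖ * b (‖z‖⁻¹ • z) := by
    rw [← hbhom _ hu.1 _ hnz, smul_inv_smul₀ hnz.ne']
  rw [hbz, abs_mul, abs_norm, mul_comm]
  exact mul_le_mul_of_nonneg_right ((hM _ hu).trans (le_max_left _ _)) hnz.le

theorem neg_inner_add_mul_norm_le [InnerProductSpace ℝ E] {C : Set E} {b : E → ℝ} {M r : ℝ}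
    {y ξ : E} (hM : 0 ≤ M) (hbM : ∀ w ∈ C, b w ≤ M * ‖w‖) (hξ : ∀ w ∈ C, -⟪ξ, w⟫ ≤ b w)
    (hr : 0 ≤ r) (hball : closedBall y r ⊆ C) : -⟪ξ, y⟫ + r * ‖ξ‖ ≤ M * (‖y‖ + r) := by
  rcases eq_or_ne ξ 0 with rfl | hξ0
  · simpa using mul_nonneg hM (add_nonneg (norm_nonneg y) hr)
  have hnξ : 0 < ‖ξ‖ := norm_pos_iff.2 hξ0
  set w := y - (r / ‖ξ‖) • ξ
  have hw : w ∈ closedBall y r := by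
    rw [mem_closedBall, dist_eq_norm, sub_sub_cancel_left, norm_neg, norm_smul, Real.norm_eq_abs,
      abs_of_nonneg (by positivity), div_mul_cancel₀ _ hnξ.ne']
  have hinner : ⟪ξ, w⟫ = ⟪ξ, y⟫ - r * ‖ξ‖ := by
    rw [inner_sub_right, real_inner_smul_right, real_inner_self_eq_norm_mul_norm]
    field_simp
  calc -⟪ξ, y⟫ + r * ‖ξ‖ = -⟪ξ, w⟫ := by rw [hinner]; ring
    _ ≤ b w := hξ w (hball hw)
    _ ≤ M * ‖w‖ := hbM w (hball hw)
    _ ≤ M * (‖y‖ + r) := mul_le_mul_of_nonneg_left (norm_le_of_mem_closedBall hw) hM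

end Geometry

theorem stmt_13_general (n : ℕ) (C : Set (EuclideanSpace ℝ (Fin n)))
    (hCopen : IsOpen C) (hCne : C.Nonempty)
    (hCcone : ∀ x ∈ C, ∀ t : ℝ, 0 < t → t • x ∈ C)
    (hacute : ∀ x : EuclideanSpace ℝ (Fin n), x ≠ 0 →
      ¬ (x ∈ closure C ∧ -x ∈ closure C))
    (b : EuclideanSpace ℝ (Fin n) → ℝ)
    (hbcont : ContinuousOn b (closure C))
    (hbhom : ∀ y ∈ closure C, ∀ t : ℝ, 0 < t → b (t • y) = t * b y)
    (m : ℕ) :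
    ∃ d : ℝ, 0 < d ∧ ∀ y ∈ C,
      ∀ ξ ∈ {ξ : EuclideanSpace ℝ (Fin n) | ∀ w ∈ C, -⟪ξ, w⟫ ≤ b w},
        -⟪ξ, y⟫ + m * Real.log (1 + ‖ξ‖) ≤
          b y + d * m +
            3 * m * Real.log (1 + 1 / Metric.infDist y (frontier C)) +
            2 * m * Real.log (1 + ‖y‖) := by
  have hclcone : ∀ z ∈ closure C, ∀ t : ℝ, 0 < t → t • z ∈ closure C := fun z hz t ht =>
    map_mem_closure (continuous_const_smul t) hz fun x hx => hCcone x hx t ht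
  obtain ⟨M, hM, hbM⟩ :=
    exists_abs_le_mul_norm_of_homogeneous isClosed_closure hclcone hbcont hbhom
  have hm : (0 : ℝ) ≤ m := m.cast_nonneg
  have hd : 0 < Real.log (1 + 6 * M) + Real.log (1 + 2 * m) :=
    add_pos_of_pos_of_nonneg (Real.log_pos (by linarith)) (Real.log_one_add_nonneg (by positivity))
  refine ⟨_, hd, fun y hy ξ hξ => ?_⟩
  set Δ := infDist y (frontier C)
  have hξy := hξ y hy
  rcases eq_or_ne ξ 0 with rfl | hξ0
  · have hlogΔ := Real.log_one_add_nonneg (one_div_nonneg.2 (infDist_nonneg : 0 ≤ Δ))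
    have hlogy := Real.log_one_add_nonneg (norm_nonneg y)
    simp only [inner_zero_left, neg_zero, norm_zero, add_zero, Real.log_one, mul_zero] at hξy ⊢
    nlinarith [mul_nonneg hd.le hm, mul_nonneg hm hlogΔ, mul_nonneg hm hlogy]
  have : Nontrivial (EuclideanSpace ℝ (Fin n)) := ⟨⟨ξ, 0, hξ0⟩⟩
  have h0 := zero_mem_frontier_of_cone hCne hCcone hacute
  have hΔ : 0 < Δ := (isClosed_frontier.notMem_iff_infDist_pos ⟨0, h0⟩).1 fun hyfr =>
    (hCopen.frontier_eq ▸ hyfr).2 hy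
  have hΔy : Δ ≤ ‖y‖ := by simpa using infDist_le_dist_of_mem (x := y) h0
  have hball : closedBall y (Δ / 2) ⊆ C := (closedBall_subset_ball (half_lt_self hΔ)).trans
    ((ball_infDist_frontier_subset_interior hy).trans interior_subset)
  have hkey := neg_inner_add_mul_norm_le hM.le
    (fun w hw => (le_abs_self _).trans (hbM w (subset_closure hw))) hξ (by positivity) hball
  exact Real.add_mul_log_one_add_le hM hm hΔ hΔy (norm_nonneg ξ) hξy
    (neg_le_of_abs_le (hbM y (subset_closure hy))) hkey

theorem stmt_13 (n : ℕ) (C : Set (EuclideanSpace ℝ (Fin n)))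
    (hCopen : IsOpen C) (hCconv : Convex ℝ C) (hCne : C.Nonempty)
    (hCcone : ∀ x ∈ C, ∀ t : ℝ, 0 < t → t • x ∈ C)
    (hacute : ∀ x : EuclideanSpace ℝ (Fin n), x ≠ 0 →
      ¬ (x ∈ closure C ∧ -x ∈ closure C))
    (b : EuclideanSpace ℝ (Fin n) → ℝ)
    (hbconv : ConvexOn ℝ (closure C) b) (hbcont : ContinuousOn b (closure C))
    (hbhom : ∀ y ∈ closure C, ∀ t : ℝ, 0 < t → b (t • y) = t * b y)
    (m : ℕ) (hm : 0 < m) :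
    ∃ d : ℝ, 0 < d ∧ ∀ y ∈ C,
      ∀ ξ ∈ {ξ : EuclideanSpace ℝ (Fin n) | ∀ w ∈ C, -⟪ξ, w⟫ ≤ b w},
        -⟪ξ, y⟫ + m * Real.log (1 + ‖ξ‖) ≤
          b y + d * m +
            3 * m * Real.log (1 + 1 / Metric.infDist y (frontier C)) +
            2 * m * Real.log (1 + ‖y‖) :=
  stmt_13_general n C hCopen hCne hCcone hacute b hbcont hbhom m
end
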